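/- arXiv:1209.1547 — 4 statements merged into one kernel-verified Lean document; each statement's English description precedes it below -/
import Mathlib

section
/- As z → ∞ (z real), the integral K(z) = ∫₀^∞ exp(−z·cosh t) dt satisfies K(z)·e^z·√(2z/π) → 1, i.e. K(z) ~ √(π/(2z))·e^{−z}. -/
open Real MeasureTheory Set Filter

/-!
Since `cosh t - 1 = 2 sinh² (t/2)`, the substitution `v = √(2z) sinh (t/2)` turns
`e^z K(z)` exactly into `(2/√(2z)) ∫₀^∞ e^{-v²} / √(1 + v²/(2z)) dv`. The weight
`1/√(1 + v²/(2z))` lies in `(0, 1]` and tends to `1`, so by dominated convergence the integral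
tends to the Gaussian integral `√π / 2`.
-/

lemma cosh_sub_one_eq_two_mul_sinh_half_sq (t : ℝ) : cosh t - 1 = 2 * sinh (t / 2) ^ 2 := by
  have h := cosh_two_mul (t / 2)
  rw [mul_div_cancel₀ t two_ne_zero, cosh_sq] at h
  linarith

lemma integral_Ioi_comp_mul_sinh_half {E : Type*} [NormedAddCommGroup E] [NormedSpace ℝ E]
    {a : ℝ} (ha : 0 < a) (g : ℝ → E) :
    ∫ t in Ioi 0, (a / 2 * cosh (t / 2)) • g (a * sinh (t / 2)) = ∫ v in Ioi 0, g v := by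
  set f : ℝ → ℝ := fun t => a * sinh (t / 2)
  have hf_image : f '' Ioi 0 = Ioi 0 := by
    ext v
    refine ⟨?_, fun hv => ⟨2 * arsinh (v / a), ?_, ?_⟩⟩
    · rintro ⟨t, ht, rfl⟩
      exact mul_pos ha (sinh_pos_iff.mpr (half_pos ht))
    · simpa using arsinh_pos_iff.mpr (div_pos hv ha)
    · simp only [f, mul_div_cancel_left₀ _ (two_ne_zero' ℝ), sinh_arsinh, mul_div_cancel₀ _ ha.ne']
  have hf_deriv : ∀ t ∈ Ioi (0 : ℝ), HasDerivWithinAt f (a / 2 * cosh (t / 2)) (Ioi 0) t := by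
    intro t _
    have := ((hasDerivAt_sinh (t / 2)).comp t ((hasDerivAt_id t).div_const 2)).const_mul a
    exact this.hasDerivWithinAt.congr_deriv (by ring)
  have hf_inj : InjOn f (Ioi 0) := fun s _ t _ hst => by
    simpa using sinh_injective (mul_left_cancel₀ ha.ne' hst)
  have h_subst := integral_image_eq_integral_abs_deriv_smul measurableSet_Ioi hf_deriv hf_inj g
  rw [hf_image] at h_subst
  rw [h_subst]
  refine setIntegral_congr_fun measurableSet_Ioi fun t _ => ?_
  rw [abs_of_pos (by positivity)]

lemma integral_Ioi_exp_neg_mul_cosh_sub_one {z : ℝ} (hz : 0 < z) :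
    ∫ t in Ioi 0, exp (-z * (cosh t - 1))
      = 2 / √(2 * z) * ∫ v in Ioi 0, exp (-v ^ 2) / √(1 + v ^ 2 / (2 * z)) := by
  have ha : 0 < √(2 * z) := by positivity
  rw [← integral_Ioi_comp_mul_sinh_half ha (fun v => exp (-v ^ 2) / √(1 + v ^ 2 / (2 * z))),
    ← integral_const_mul]
  refine setIntegral_congr_fun measurableSet_Ioi fun t _ => ?_
  have hv_sq : (√(2 * z) * sinh (t / 2)) ^ 2 = z * (cosh t - 1) := by
    rw [mul_pow, sq_sqrt (by positivity), cosh_sub_one_eq_two_mul_sinh_half_sq]; ring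
  have hv_sqrt : √(1 + (√(2 * z) * sinh (t / 2)) ^ 2 / (2 * z)) = cosh (t / 2) := by
    rw [hv_sq, cosh_sub_one_eq_two_mul_sinh_half_sq, ← sqrt_sq (cosh_pos (t / 2)).le, cosh_sq']
    congr 1
    field_simp
  rw [smul_eq_mul, hv_sqrt, hv_sq, neg_mul]
  field_simp [(cosh_pos (t / 2)).ne']

lemma integral_mul_exp_cosh_eq {z : ℝ} (hz : 0 < z) :
    (∫ t in Ici 0, exp (-z * cosh t)) * exp z * √(2 * z / π)
      = 2 / √π * ∫ v in Ioi 0, exp (-v ^ 2) / √(1 + v ^ 2 / (2 * z)) := by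
  have h_shift : ∀ t, exp (-z * cosh t) * exp z = exp (-z * (cosh t - 1)) := fun t => by
    rw [← exp_add]; ring_nf
  rw [integral_Ici_eq_integral_Ioi, ← integral_mul_const]
  simp_rw [h_shift]
  rw [integral_Ioi_exp_neg_mul_cosh_sub_one hz, sqrt_div (by positivity)]
  field_simp [(sqrt_pos.mpr pi_pos).ne', (sqrt_pos.mpr (by positivity : 0 < 2 * z)).ne']

lemma tendsto_integral_div_sqrt_one_add_sq_div {μ : Measure ℝ} {g : ℝ → ℝ} (hg : Integrable g μ) :
    Tendsto (fun z => ∫ v, g v / √(1 + v ^ 2 / (2 * z)) ∂μ) atTop (nhds (∫ v, g v ∂μ)) := by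
  have h_one_le : ∀ z, 0 < z → ∀ v : ℝ, 1 ≤ √(1 + v ^ 2 / (2 * z)) := fun z hz v =>
    one_le_sqrt.mpr (le_add_of_nonneg_right (by positivity))
  refine tendsto_integral_filter_of_dominated_convergence (fun v => |g v|) ?_ ?_ hg.abs ?_
  · filter_upwards [eventually_gt_atTop 0] with z hz
    exact (hg.aemeasurable.div (by fun_prop : Measurable _).aemeasurable).aestronglyMeasurable
  · filter_upwards [eventually_gt_atTop 0] with z hz
    refine Eventually.of_forall fun v => ?_
    rw [norm_div, norm_of_nonneg (sqrt_nonneg _), Real.norm_eq_abs]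
    exact div_le_self (abs_nonneg _) (h_one_le z hz v)
  · refine Eventually.of_forall fun v => ?_
    have h_inv : Tendsto (fun z : ℝ => v ^ 2 / (2 * z)) atTop (nhds 0) :=
      tendsto_const_nhds.div_atTop (tendsto_id.const_mul_atTop two_pos)
    have h_sqrt : Tendsto (fun z : ℝ => √(1 + v ^ 2 / (2 * z))) atTop (nhds 1) := by
      simpa using ((tendsto_const_nhds (x := (1 : ℝ))).add h_inv).sqrt
    simpa [Pi.div_def] using tendsto_const_nhds.div h_sqrt one_ne_zero

theorem stmt_3 :
    Tendsto (fun z : ℝ =>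
        (∫ t in Ici (0:ℝ), Real.exp (-z * Real.cosh t)) * Real.exp z * Real.sqrt (2 * z / π))
      atTop (nhds 1) := by
  have h_gauss : ∫ v in Ioi 0, exp (-v ^ 2) = √π / 2 := by
    simpa using integral_gaussian_Ioi 1
  have h_lim := (tendsto_integral_div_sqrt_one_add_sq_div (μ := volume.restrict (Ioi 0))
    (integrable_exp_neg_mul_sq one_pos).restrict).const_mul (2 / √π)
  simp only [neg_one_mul] at h_lim
  rw [h_gauss, div_mul_div_cancel₀ (sqrt_pos.mpr pi_pos).ne', div_self two_ne_zero] at h_lim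
  refine h_lim.congr' ?_
  filter_upwards [eventually_gt_atTop 0] with z hz
  exact (integral_mul_exp_cosh_eq hz).symm
end

section
/- For the Gaussian f(x) = exp(−x²), the trapezoidal-rule error satisfies |∑_{n∈ℤ} h·exp(−n²h²) − √π| ≤ 2√π · exp(−π²/h²) / (1 − exp(−3π²/h²)) for all h with 0 < h < π. -/
/-!
By Poisson summation, `∑ₙ h e^{-n²h²} = √π ∑ₙ e^{-c n²}` with `c = π²/h²`, so the error is
`2√π ∑_{n ≥ 1} e^{-c n²}`. Since `n² ≥ 1 + 3(n - 1)` for `n ≥ 1`, this tail is dominated by the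
geometric series `e^{-c} ∑_{k ≥ 0} e^{-3ck}`.
-/

open Real

lemma tsum_int_eq_zero_add_two_nsmul_tsum_nat_succ {M : Type*} [AddCommMonoid M]
    [TopologicalSpace M] [ContinuousAdd M] [T2Space M] {f : ℤ → M} (hf : Function.Even f)
    (hs : Summable fun n : ℕ ↦ f (n + 1)) :
    ∑' n : ℤ, f n = f 0 + 2 • ∑' n : ℕ, f (n + 1) := by
  have hneg : (fun n : ℕ ↦ f (-(n + 1))) = fun n : ℕ ↦ f (n + 1) := funext fun n ↦ hf _
  rw [tsum_of_add_one_of_neg_add_one hs (hneg ▸ hs), hneg, two_nsmul]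
  abel

lemma exp_neg_mul_nat_succ_sq_le {c : ℝ} (hc : 0 ≤ c) (n : ℕ) :
    exp (-c * ((n : ℝ) + 1) ^ 2) ≤ exp (-c) * exp (-(3 * c)) ^ n := by
  rw [← exp_nat_mul, ← exp_add, exp_le_exp]
  have hn : (n : ℝ) ≤ (n : ℝ) ^ 2 := by exact_mod_cast Nat.le_self_pow two_ne_zero n
  nlinarith [mul_le_mul_of_nonneg_left hn hc]

section GaussianTail

variable {c : ℝ} (hc : 0 < c)
include hc

lemma summable_exp_neg_mul_nat_succ_sq :
    Summable fun n : ℕ ↦ exp (-c * ((n : ℝ) + 1) ^ 2) := by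
  have hr : exp (-(3 * c)) < 1 := exp_lt_one_iff.mpr (by linarith)
  exact .of_nonneg_of_le (fun _ ↦ (exp_pos _).le) (exp_neg_mul_nat_succ_sq_le hc.le)
    ((summable_geometric_of_lt_one (exp_pos _).le hr).mul_left _)

lemma tsum_exp_neg_mul_nat_succ_sq_le :
    ∑' n : ℕ, exp (-c * ((n : ℝ) + 1) ^ 2) ≤ exp (-c) / (1 - exp (-(3 * c))) := by
  have hr : exp (-(3 * c)) < 1 := exp_lt_one_iff.mpr (by linarith)
  have hgeo := summable_geometric_of_lt_one (exp_pos _).le hr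
  calc ∑' n : ℕ, exp (-c * ((n : ℝ) + 1) ^ 2)
      ≤ ∑' n : ℕ, exp (-c) * exp (-(3 * c)) ^ n :=
        (summable_exp_neg_mul_nat_succ_sq hc).tsum_le_tsum (exp_neg_mul_nat_succ_sq_le hc.le)
          (hgeo.mul_left _)
    _ = exp (-c) / (1 - exp (-(3 * c))) := by
        rw [tsum_mul_left, tsum_geometric_of_lt_one (exp_pos _).le hr, div_eq_mul_inv]

lemma tsum_int_exp_neg_mul_sq :
    ∑' n : ℤ, exp (-c * (n : ℝ) ^ 2) = 1 + 2 * ∑' n : ℕ, exp (-c * ((n : ℝ) + 1) ^ 2) := by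
  have heven : Function.Even fun n : ℤ ↦ exp (-c * (n : ℝ) ^ 2) := fun n ↦ by
    simp only [Int.cast_neg, neg_sq]
  have hs := summable_exp_neg_mul_nat_succ_sq hc
  rw [tsum_int_eq_zero_add_two_nsmul_tsum_nat_succ heven (by exact_mod_cast hs)]
  push_cast
  simp [nsmul_eq_mul]

end GaussianTail

lemma tsum_int_mul_exp_neg_sq_mul_sq {h : ℝ} (h0 : 0 < h) :
    ∑' n : ℤ, h * exp (-(n : ℝ) ^ 2 * h ^ 2) =
      √π * ∑' n : ℤ, exp (-(π ^ 2 / h ^ 2) * (n : ℝ) ^ 2) := by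
  have ha : 0 < h ^ 2 / π := by positivity
  have hroot : (h ^ 2 / π) ^ (1 / 2 : ℝ) = h / √π := by
    rw [← sqrt_eq_rpow, sqrt_div (sq_nonneg h), sqrt_sq h0.le]
  have hlhs : ∀ n : ℤ, exp (-(n : ℝ) ^ 2 * h ^ 2) = exp (-π * (h ^ 2 / π) * (n : ℝ) ^ 2) :=
    fun n ↦ by field_simp
  have hrhs : -π / (h ^ 2 / π) = -(π ^ 2 / h ^ 2) := by field_simp
  rw [tsum_mul_left, tsum_congr hlhs, tsum_exp_neg_mul_int_sq ha, hroot, hrhs]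
  field_simp

theorem stmt_6_general (h : ℝ) (h0 : 0 < h) :
    |(∑' n : ℤ, h * Real.exp (-(n : ℝ) ^ 2 * h ^ 2)) - Real.sqrt π|
      ≤ 2 * Real.sqrt π * Real.exp (-π ^ 2 / h ^ 2) / (1 - Real.exp (-3 * π ^ 2 / h ^ 2)) := by
  set c := π ^ 2 / h ^ 2
  have hc : 0 < c := by positivity
  have hc1 : -π ^ 2 / h ^ 2 = -c := neg_div _ _
  have hc3 : -3 * π ^ 2 / h ^ 2 = -(3 * c) := by ring
  have herror : √π * (1 + 2 * ∑' n : ℕ, exp (-c * ((n : ℝ) + 1) ^ 2)) - √π =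
      2 * √π * ∑' n : ℕ, exp (-c * ((n : ℝ) + 1) ^ 2) := by ring
  rw [tsum_int_mul_exp_neg_sq_mul_sq h0, tsum_int_exp_neg_mul_sq hc, herror,
    abs_of_nonneg (by positivity), hc1, hc3, mul_div_assoc]
  gcongr
  exact tsum_exp_neg_mul_nat_succ_sq_le hc

theorem stmt_6 (h : ℝ) (h0 : 0 < h) (hπ : h < π) :
    |(∑' n : ℤ, h * Real.exp (-(n : ℝ) ^ 2 * h ^ 2)) - Real.sqrt π|
      ≤ 2 * Real.sqrt π * Real.exp (-π ^ 2 / h ^ 2) / (1 - Real.exp (-3 * π ^ 2 / h ^ 2)) :=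
  stmt_6_general h h0
end

section
/- For z > 0 and ν ∈ ℝ, the map h ↦ ∑_{n=0}^{∞} h·w_n·cosh(ν n h)·exp(−z·cosh(n h)) (with w₀ = 1/2 and w_n = 1 for n ≥ 1) converges to ∫₀^∞ cosh(νt)·exp(−z·cosh t) dt as h → 0⁺. -/
open Real MeasureTheory Set Filter Topology

/-! The trapezoidal sum is the left Riemann sum `∑ h f(nh)` minus `h f(0)/2`, and the left
Riemann sum is the integral over `[0, ∞)` of the step function `t ↦ f(h⌊t/h⌋)`. For `h ≤ 1` the
node `h⌊t/h⌋` lies in `[t - 1, t]`, so the step functions are dominated by any `g` with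
`‖f s‖ ≤ g t` for `s ≤ t ≤ s + 1`, and dominated convergence gives the limit. For the `K_ν`
integrand, `cosh (ν s) e^{-z cosh s} ≤ exp (|ν| t - z eᵗ / (2e))` on that range, and the
double-exponential decay makes this envelope integrable. -/

section RiemannSum

variable {E : Type*} [NormedAddCommGroup E]

lemma floor_div_eq_iff_mem_Ico {h : ℝ} (hh : 0 < h) (t : ℝ) (n : ℤ) :
    ⌊t / h⌋ = n ↔ t ∈ Ico (n * h) ((n + 1) * h) := by
  rw [Int.floor_eq_iff, mem_Ico, le_div_iff₀ hh, div_lt_iff₀ hh]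

lemma mul_floor_div_mem_Ioc {h : ℝ} (hh : 0 < h) (t : ℝ) : h * ⌊t / h⌋ ∈ Ioc (t - h) t := by
  obtain ⟨hle, hlt⟩ := (floor_div_eq_iff_mem_Ico hh t ⌊t / h⌋).1 rfl
  constructor <;> linarith

lemma tendsto_mul_floor_div_nhdsGT (t : ℝ) :
    Tendsto (fun h : ℝ => h * ⌊t / h⌋) (𝓝[>] 0) (𝓝 t) := by
  have hlow : Tendsto (fun h : ℝ => t - h) (𝓝[>] 0) (𝓝 t) := by
    simpa using (tendsto_const_nhds.sub tendsto_id).mono_left (nhdsWithin_le_nhds (a := (0 : ℝ)))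
  refine tendsto_of_tendsto_of_tendsto_of_le_of_le' hlow tendsto_const_nhds ?_ ?_ <;>
    filter_upwards [self_mem_nhdsWithin] with h hh
  exacts [(mul_floor_div_mem_Ioc hh t).1.le, (mul_floor_div_mem_Ioc hh t).2]

lemma hasSum_smul_apply_nat_mul [NormedSpace ℝ E] [CompleteSpace E] {f : ℝ → E} {h : ℝ}
    (hh : 0 < h) (hf : IntegrableOn (fun t => f (h * ⌊t / h⌋)) (Ici 0)) :
    HasSum (fun n : ℕ => h • f (n * h)) (∫ t in Ici 0, f (h * ⌊t / h⌋)) := by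
  set piece : ℕ → Set ℝ := fun n => Ico (n * h) ((n + 1) * h)
  have hmem : ∀ n t, t ∈ piece n ↔ ⌊t / h⌋ = n := fun n t => by
    rw [floor_div_eq_iff_mem_Ico hh]
    simp [piece]
  have hunion : ⋃ n, piece n = Ici 0 := by
    ext t
    simp only [mem_iUnion, hmem, mem_Ici]
    constructor
    · rintro ⟨n, hn⟩
      have : 0 ≤ t / h := Int.floor_nonneg.1 (hn ▸ Int.natCast_nonneg n)
      simpa using (le_div_iff₀ hh).1 this
    · intro ht
      exact ⟨⌊t / h⌋.toNat, (Int.toNat_of_nonneg (Int.floor_nonneg.2 (by positivity))).symm⟩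
  have hdisj : Pairwise (Function.onFun Disjoint piece) := fun m n hmn =>
    Set.disjoint_left.2 fun t hm hn => hmn <| by
      exact_mod_cast ((hmem m t).1 hm).symm.trans ((hmem n t).1 hn)
  have hpiece : ∀ n : ℕ, ∫ t in piece n, f (h * ⌊t / h⌋) = h • f (n * h) := fun n => by
    rw [setIntegral_congr_fun measurableSet_Ico fun t ht => by rw [(hmem n t).1 ht],
      setIntegral_const, Real.volume_real_Ico, max_eq_left (by nlinarith), Int.cast_natCast,
      mul_comm h]
    congr 1
    ring
  have hsum :=
    hasSum_integral_iUnion (s := piece) (fun _ => measurableSet_Ico) hdisj (hunion ▸ hf)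
  rwa [hunion, funext hpiece] at hsum

variable {f : ℝ → E} {g : ℝ → ℝ}

lemma Continuous.aestronglyMeasurable_comp_mul_floor_div (hf : Continuous f) (h : ℝ)
    {μ : Measure ℝ} : AEStronglyMeasurable (fun t => f (h * ⌊t / h⌋)) μ :=
  hf.comp_aestronglyMeasurable <| Measurable.aestronglyMeasurable <|
    measurable_const.mul <| (measurable_of_countable _).comp (measurable_id.div_const h).floor

lemma norm_apply_mul_floor_div_le (hfg : ∀ s t, 0 ≤ s → s ≤ t → t ≤ s + 1 → ‖f s‖ ≤ g t)
    {h : ℝ} (hh : h ∈ Ioc 0 1) {t : ℝ} (ht : 0 ≤ t) : ‖f (h * ⌊t / h⌋)‖ ≤ g t := by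
  obtain ⟨hlow, hle⟩ := mul_floor_div_mem_Ioc hh.1 t
  have hfloor : (0 : ℝ) ≤ ⌊t / h⌋ := by
    exact_mod_cast Int.floor_nonneg.2 (div_nonneg ht hh.1.le)
  exact hfg _ _ (mul_nonneg hh.1.le hfloor) hle (by linarith [hh.2])

lemma integrableOn_apply_mul_floor_div (hf : Continuous f) (hg : IntegrableOn g (Ici 0))
    (hfg : ∀ s t, 0 ≤ s → s ≤ t → t ≤ s + 1 → ‖f s‖ ≤ g t) {h : ℝ} (hh : h ∈ Ioc 0 1) :
    IntegrableOn (fun t => f (h * ⌊t / h⌋)) (Ici 0) :=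
  hg.mono' (hf.aestronglyMeasurable_comp_mul_floor_div h) <|
    ae_restrict_of_forall_mem measurableSet_Ici fun _ ht => norm_apply_mul_floor_div_le hfg hh ht

lemma tendsto_setIntegral_apply_mul_floor_div [NormedSpace ℝ E] (hf : Continuous f)
    (hg : IntegrableOn g (Ici 0)) (hfg : ∀ s t, 0 ≤ s → s ≤ t → t ≤ s + 1 → ‖f s‖ ≤ g t) :
    Tendsto (fun h => ∫ t in Ici 0, f (h * ⌊t / h⌋)) (𝓝[>] 0) (𝓝 (∫ t in Ici 0, f t)) := by
  refine tendsto_integral_filter_of_dominated_convergence g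
    (.of_forall fun h => hf.aestronglyMeasurable_comp_mul_floor_div h) ?_ hg
    (.of_forall fun t => (hf.tendsto t).comp (tendsto_mul_floor_div_nhdsGT t))
  filter_upwards [Ioc_mem_nhdsGT one_pos] with h hh
  exact ae_restrict_of_forall_mem measurableSet_Ici fun _ ht =>
    norm_apply_mul_floor_div_le hfg hh ht

theorem tendsto_tsum_trapezoid_nhdsGT [NormedSpace ℝ E] [CompleteSpace E] (hf : Continuous f)
    (hg : IntegrableOn g (Ici 0)) (hfg : ∀ s t, 0 ≤ s → s ≤ t → t ≤ s + 1 → ‖f s‖ ≤ g t) :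
    Tendsto (fun h : ℝ => ∑' n : ℕ, (h * if n = 0 then 1 / 2 else 1) • f (n * h)) (𝓝[>] 0)
      (𝓝 (∫ t in Ici 0, f t)) := by
  have hcorr : Tendsto (fun h : ℝ => (h / 2) • f 0) (𝓝[>] 0) (𝓝 0) := by
    simpa using ((tendsto_id.div_const 2).smul_const (f 0)).mono_left
      (nhdsWithin_le_nhds (a := (0 : ℝ)))
  have hlim := (tendsto_setIntegral_apply_mul_floor_div hf hg hfg).sub hcorr
  rw [sub_zero] at hlim
  refine hlim.congr' ?_
  filter_upwards [Ioc_mem_nhdsGT one_pos] with h hh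
  refine (HasSum.tsum_eq ?_).symm
  convert (hasSum_smul_apply_nat_mul hh.1 (integrableOn_apply_mul_floor_div hf hg hfg hh)).sub
    (hasSum_ite_eq 0 ((h / 2) • f 0)) using 2 with n
  split_ifs with hn
  · subst hn
    simp only [one_div, CharP.cast_eq_zero, zero_mul]
    module
  · rw [mul_one, sub_zero]

end RiemannSum

lemma exp_div_two_le_cosh (x : ℝ) : exp x / 2 ≤ cosh x := by
  rw [cosh_eq]
  linarith [exp_pos (-x)]

lemma cosh_le_exp_abs (x : ℝ) : cosh x ≤ exp |x| := by
  rw [← cosh_abs, cosh_eq]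
  linarith [exp_le_exp.2 (neg_le_self (abs_nonneg x))]

lemma eventually_mul_le_exp (a : ℝ) : ∀ᶠ t in atTop, a * t ≤ exp t := by
  filter_upwards [(tendsto_exp_div_pow_atTop 1).eventually_ge_atTop a, eventually_gt_atTop 0]
    with t ht htpos
  rwa [pow_one, le_div_iff₀ htpos] at ht

lemma integrableOn_exp_mul_sub_mul_exp (a : ℝ) {c : ℝ} (hc : 0 < c) :
    IntegrableOn (fun t => exp (a * t - c * exp t)) (Ici 0) := by
  rw [integrableOn_Ici_iff_integrableOn_Ioi]
  refine integrable_of_isBigO_exp_neg one_pos (by fun_prop) (.of_bound' ?_)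
  filter_upwards [eventually_mul_le_exp ((a + 1) / c)] with t ht
  rw [norm_of_nonneg (exp_pos _).le, norm_of_nonneg (exp_pos _).le, exp_le_exp]
  rw [div_mul_eq_mul_div, div_le_iff₀ hc] at ht
  linarith

lemma norm_cosh_mul_mul_exp_neg_mul_cosh_le {z : ℝ} (hz : 0 ≤ z) (ν : ℝ) {s t : ℝ}
    (hs : 0 ≤ s) (hst : s ≤ t) (hts : t ≤ s + 1) :
    ‖cosh (ν * s) * exp (-z * cosh s)‖ ≤ exp (|ν| * t - z / (2 * exp 1) * exp t) := by
  have hcosh : cosh (ν * s) ≤ exp (|ν| * t) := by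
    refine (cosh_le_exp_abs _).trans (exp_le_exp.2 ?_)
    rw [abs_mul, abs_of_nonneg hs]
    exact mul_le_mul_of_nonneg_left hst (abs_nonneg ν)
  have hexp : exp (-z * cosh s) ≤ exp (-(z / (2 * exp 1) * exp t)) := by
    rw [exp_le_exp, neg_mul, neg_le_neg_iff]
    calc z / (2 * exp 1) * exp t = z * exp (t - 1) / 2 := by rw [exp_sub]; ring
      _ ≤ z * (exp s / 2) := by
        rw [mul_div_assoc]
        gcongr
        linarith
      _ ≤ z * cosh s := by gcongr; exact exp_div_two_le_cosh s
  rw [norm_of_nonneg (by positivity), sub_eq_add_neg, exp_add]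
  exact mul_le_mul hcosh hexp (exp_pos _).le (exp_pos _).le

theorem stmt_14 (z ν : ℝ) (hz : 0 < z) :
    Tendsto (fun h : ℝ =>
        ∑' n : ℕ, h * (if n = 0 then (1:ℝ)/2 else 1) *
          Real.cosh (ν * (n * h)) * Real.exp (-z * Real.cosh (n * h)))
      (nhdsWithin 0 (Ioi 0))
      (nhds (∫ t in Ici (0:ℝ), Real.cosh (ν * t) * Real.exp (-z * Real.cosh t))) := by
  have hlim := tendsto_tsum_trapezoid_nhdsGT (f := fun t => cosh (ν * t) * exp (-z * cosh t))
    (by fun_prop) (integrableOn_exp_mul_sub_mul_exp |ν| (by positivity : 0 < z / (2 * exp 1)))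
    fun s t hs hst hts => norm_cosh_mul_mul_exp_neg_mul_cosh_le hz.le ν hs hst hts
  simpa only [smul_eq_mul, mul_assoc] using hlim
end

section
/- For x > 0, ∫₀^∞ exp(−x·sinh s) ds converges, and (2/π)·∫₀^{π/2} sin(x·cos θ) dθ − (2/π)·∫₀^∞ exp(−x·sinh s) ds satisfies Bessel's equation of order zero: x·y'' + y' + x·y = 0. -/
/-!
With `J x = ∫₀^{π/2} sin (x cos θ) dθ` and `K x = ∫₀^∞ exp (-x sinh s) ds`, both integrals may be
differentiated twice under the integral sign for `x > 0` (for `K`, `sinh s ^ n * exp (-x sinh s)`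
is dominated by a multiple of `exp (-x s / 2)`). The Bessel operator `x D² + D + x` turns each
integrand into an exact derivative:
`x sin² θ sin (x cos θ) + cos θ cos (x cos θ) = ∂θ (sin θ cos (x cos θ))` and
`(x cosh² s - sinh s) exp (-x sinh s) = ∂s (-cosh s exp (-x sinh s))`.
The boundary terms give `1` in both cases, so the operator annihilates `J - K`.
-/

open Real MeasureTheory Set Filter Topology

theorem hasDerivAt_intervalIntegral_of_continuous_uncurry_deriv {E : Type*}
    [NormedAddCommGroup E] [NormedSpace ℝ E] {F F' : ℝ → ℝ → E} {a b x₀ : ℝ}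
    (hF : ∀ x, Continuous (F x)) (hF' : Continuous (Function.uncurry F'))
    (hderiv : ∀ x θ, HasDerivAt (F · θ) (F' x θ) x) :
    HasDerivAt (fun x => ∫ θ in a..b, F x θ) (∫ θ in a..b, F' x₀ θ) x₀ := by
  obtain ⟨C, hC⟩ := ((isCompact_closedBall x₀ 1).prod (isCompact_uIcc (a := a) (b := b)))
    |>.exists_bound_of_continuousOn hF'.continuousOn
  refine (intervalIntegral.hasDerivAt_integral_of_dominated_loc_of_deriv_le
    (bound := fun _ => C) (Metric.closedBall_mem_nhds x₀ one_pos)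
    (Eventually.of_forall fun x => (hF x).aestronglyMeasurable) ((hF x₀).intervalIntegrable _ _)
    (hF'.comp (Continuous.prodMk_right x₀)).aestronglyMeasurable ?_ intervalIntegrable_const ?_).2
  · exact ae_of_all _ fun θ hθ x hx => hC (x, θ) ⟨hx, uIoc_subset_uIcc hθ⟩
  · exact ae_of_all _ fun θ _ x _ => hderiv x θ

theorem deriv_deriv_eq_of_hasDerivAt {f f' : ℝ → ℝ} {f'' x : ℝ}
    (hf : ∀ᶠ z in 𝓝 x, HasDerivAt f (f' z) z) (hf' : HasDerivAt f' f'' x) :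
    deriv (deriv f) x = f'' := by
  rw [Filter.EventuallyEq.deriv_eq (hf.mono fun z hz => hz.deriv), hf'.deriv]

theorem pow_mul_exp_neg_mul_le {t c : ℝ} (ht : 0 ≤ t) (hc : 0 < c) (n : ℕ) :
    t ^ n * exp (-c * t) ≤ n.factorial * (2 / c) ^ n * exp (-(c / 2) * t) := by
  have h := pow_div_factorial_le_exp (x := c / 2 * t) (by positivity) n
  rw [div_le_iff₀ (by positivity)] at h
  calc t ^ n * exp (-c * t) = (2 / c) ^ n * (c / 2 * t) ^ n * exp (-c * t) := by
        rw [← mul_pow]; field_simp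
    _ ≤ (2 / c) ^ n * (exp (c / 2 * t) * n.factorial) * exp (-c * t) := by gcongr
    _ = n.factorial * (2 / c) ^ n * exp (-(c / 2) * t) := by
        rw [mul_comm (exp _), mul_assoc, mul_assoc, mul_assoc, ← exp_add]; ring_nf

theorem integrableOn_sinh_pow_mul_exp_neg_mul_sinh (n : ℕ) {c : ℝ} (hc : 0 < c) :
    IntegrableOn (fun s => sinh s ^ n * exp (-c * sinh s)) (Ioi 0) := by
  refine ((exp_neg_integrableOn_Ioi 0 (half_pos hc)).const_mul (n.factorial * (2 / c) ^ n)).mono'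
    (by fun_prop : Continuous _).aestronglyMeasurable ?_
  filter_upwards [ae_restrict_mem measurableSet_Ioi] with s (hs : 0 < s)
  have hsinh : s < sinh s := self_lt_sinh_iff.2 hs
  rw [norm_of_nonneg (by positivity)]
  calc sinh s ^ n * exp (-c * sinh s) ≤ n.factorial * (2 / c) ^ n * exp (-(c / 2) * sinh s) :=
        pow_mul_exp_neg_mul_le (by linarith) hc n
    _ ≤ n.factorial * (2 / c) ^ n * exp (-(c / 2) * s) := by
        gcongr n.factorial * (2 / c) ^ n * ?_
        exact exp_le_exp.2 (by nlinarith)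

theorem hasDerivAt_integral_sinh_pow_mul_exp_neg_mul_sinh (n : ℕ) {x : ℝ} (hx : 0 < x) :
    HasDerivAt (fun x => ∫ s in Ioi 0, sinh s ^ n * exp (-x * sinh s))
      (-∫ s in Ioi 0, sinh s ^ (n + 1) * exp (-x * sinh s)) x := by
  rw [← integral_neg]
  refine (hasDerivAt_integral_of_dominated_loc_of_deriv_le (μ := volume.restrict (Ioi 0))
    (F := fun x s => sinh s ^ n * exp (-x * sinh s))
    (F' := fun x s => -(sinh s ^ (n + 1) * exp (-x * sinh s)))
    (bound := fun s => sinh s ^ (n + 1) * exp (-(x / 2) * sinh s))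
    (Metric.ball_mem_nhds x (half_pos hx))
    (Eventually.of_forall fun _ => (by fun_prop : Continuous _).aestronglyMeasurable)
    (integrableOn_sinh_pow_mul_exp_neg_mul_sinh n hx)
    (by fun_prop : Continuous _).aestronglyMeasurable ?_
    (integrableOn_sinh_pow_mul_exp_neg_mul_sinh (n + 1) (half_pos hx)) ?_).2
  · filter_upwards [ae_restrict_mem measurableSet_Ioi] with s (hs : 0 < s) x' hx'
    replace hx' : x / 2 ≤ x' := by
      rw [Metric.mem_ball, Real.dist_eq, abs_lt] at hx'; linarith
    have hsinh : 0 < sinh s := sinh_pos_iff.2 hs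
    rw [norm_neg, norm_of_nonneg (by positivity)]
    gcongr sinh s ^ (n + 1) * ?_
    exact exp_le_exp.2 (by nlinarith)
  · exact ae_of_all _ fun s x' _ =>
      (((hasDerivAt_neg x').mul_const (sinh s)).exp.const_mul (sinh s ^ n)).congr_deriv (by ring)

theorem tendsto_cosh_mul_exp_neg_mul_sinh_atTop {x : ℝ} (hx : 0 < x) :
    Tendsto (fun s => cosh s * exp (-x * sinh s)) atTop (𝓝 0) := by
  have hsinh : Tendsto sinh atTop atTop :=
    tendsto_atTop_mono' atTop ((eventually_ge_atTop 0).mono fun s hs => self_le_sinh_iff.2 hs)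
      tendsto_id
  have hpoly : Tendsto (fun t => (1 + t) * exp (-x * t)) atTop (𝓝 0) := by
    simpa [add_mul] using (tendsto_rpow_mul_exp_neg_mul_atTop_nhds_zero 0 x hx).add
      (tendsto_rpow_mul_exp_neg_mul_atTop_nhds_zero 1 x hx)
  refine tendsto_of_tendsto_of_tendsto_of_le_of_le' tendsto_const_nhds (hpoly.comp hsinh)
    (Eventually.of_forall fun s => by positivity) ?_
  filter_upwards [eventually_ge_atTop 0] with s hs
  have hcosh : cosh s ≤ 1 + sinh s := by
    linarith [cosh_sub_sinh s, exp_le_one_iff.2 (neg_nonpos.2 hs)]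
  exact mul_le_mul_of_nonneg_right hcosh (exp_pos _).le

theorem bessel_operator_integral_exp_neg_mul_sinh_eq_one {x : ℝ} (hx : 0 < x) :
    x * (∫ s in Ioi 0, sinh s ^ 2 * exp (-x * sinh s))
      - (∫ s in Ioi 0, sinh s * exp (-x * sinh s))
      + x * (∫ s in Ioi 0, exp (-x * sinh s)) = 1 := by
  have hI2 := integrableOn_sinh_pow_mul_exp_neg_mul_sinh 2 hx
  have hI1 : IntegrableOn (fun s => sinh s * exp (-x * sinh s)) (Ioi 0) := by
    simpa using integrableOn_sinh_pow_mul_exp_neg_mul_sinh 1 hx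
  have hI0 : IntegrableOn (fun s => exp (-x * sinh s)) (Ioi 0) := by
    simpa using integrableOn_sinh_pow_mul_exp_neg_mul_sinh 0 hx
  have hderiv : ∀ s ∈ Ici (0 : ℝ), HasDerivAt (fun s => -(cosh s * exp (-x * sinh s)))
      (x * (sinh s ^ 2 * exp (-x * sinh s)) - sinh s * exp (-x * sinh s)
        + x * exp (-x * sinh s)) s := fun s _ =>
    ((hasDerivAt_cosh s).mul ((hasDerivAt_sinh s).const_mul (-x)).exp).neg.congr_deriv
      (by linear_combination x * exp (-x * sinh s) * cosh_sq s)
  have h := integral_Ioi_of_hasDerivAt_of_tendsto' hderiv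
    (((hI2.const_mul x).sub hI1).add (hI0.const_mul x))
    (by simpa using (tendsto_cosh_mul_exp_neg_mul_sinh_atTop hx).neg)
  rw [integral_add, integral_sub, integral_const_mul, integral_const_mul] at h
  · simpa using h
  exacts [hI2.const_mul x, hI1, (hI2.const_mul x).sub hI1, hI0.const_mul x]

theorem hasDerivAt_intervalIntegral_sin_mul_cos (a b x : ℝ) :
    HasDerivAt (fun x => ∫ θ in a..b, sin (x * cos θ))
      (∫ θ in a..b, cos θ * cos (x * cos θ)) x :=
  hasDerivAt_intervalIntegral_of_continuous_uncurry_deriv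
    (F' := fun x θ => cos θ * cos (x * cos θ)) (fun _ => by fun_prop) (by fun_prop)
    fun x θ => (hasDerivAt_mul_const (cos θ)).sin.congr_deriv (by ring)

theorem hasDerivAt_intervalIntegral_cos_mul_cos_mul_cos (a b x : ℝ) :
    HasDerivAt (fun x => ∫ θ in a..b, cos θ * cos (x * cos θ))
      (-∫ θ in a..b, cos θ ^ 2 * sin (x * cos θ)) x := by
  rw [← intervalIntegral.integral_neg]
  exact hasDerivAt_intervalIntegral_of_continuous_uncurry_deriv
    (F' := fun x θ => -(cos θ ^ 2 * sin (x * cos θ))) (fun _ => by fun_prop) (by fun_prop)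
    fun x θ => ((hasDerivAt_mul_const (cos θ)).cos.const_mul (cos θ)).congr_deriv (by ring)

theorem bessel_operator_intervalIntegral_sin_mul_cos_eq_one (x : ℝ) :
    -x * (∫ θ in 0..(π / 2), cos θ ^ 2 * sin (x * cos θ))
      + (∫ θ in 0..(π / 2), cos θ * cos (x * cos θ))
      + x * (∫ θ in 0..(π / 2), sin (x * cos θ)) = 1 := by
  have hderiv : ∀ θ ∈ uIcc 0 (π / 2), HasDerivAt (fun θ => sin θ * cos (x * cos θ))
      (-x * (cos θ ^ 2 * sin (x * cos θ)) + cos θ * cos (x * cos θ)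
        + x * sin (x * cos θ)) θ := fun θ _ =>
    ((hasDerivAt_sin θ).mul ((hasDerivAt_cos θ).const_mul x).cos).congr_deriv
      (by linear_combination x * sin (x * cos θ) * sin_sq θ)
  have h := intervalIntegral.integral_eq_sub_of_hasDerivAt hderiv
    ((by fun_prop : Continuous _).intervalIntegrable _ _)
  rw [intervalIntegral.integral_add, intervalIntegral.integral_add,
    intervalIntegral.integral_const_mul, intervalIntegral.integral_const_mul] at h
  · simpa using h
  all_goals exact Continuous.intervalIntegrable (by fun_prop) _ _

theorem stmt_16 (y : ℝ → ℝ)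
    (hy : ∀ x : ℝ, y x = (2 / π) * (∫ θ in (0:ℝ)..(π / 2), Real.sin (x * Real.cos θ))
        - (2 / π) * ∫ s in Ioi (0:ℝ), Real.exp (-x * Real.sinh s))
    (x : ℝ) (hx : 0 < x) :
    IntegrableOn (fun s : ℝ => Real.exp (-x * Real.sinh s)) (Ioi 0) ∧
    x * deriv (deriv y) x + deriv y x + x * y x = 0 := by
  refine ⟨by simpa using integrableOn_sinh_pow_mul_exp_neg_mul_sinh 0 hx, ?_⟩
  have hK {z : ℝ} (hz : 0 < z) : HasDerivAt (fun z => ∫ s in Ioi 0, exp (-z * sinh s))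
      (-∫ s in Ioi 0, sinh s * exp (-z * sinh s)) z := by
    simpa using hasDerivAt_integral_sinh_pow_mul_exp_neg_mul_sinh 0 hz
  have hK' : HasDerivAt (fun z => -∫ s in Ioi 0, sinh s * exp (-z * sinh s))
      (∫ s in Ioi 0, sinh s ^ 2 * exp (-x * sinh s)) x := by
    simpa using (hasDerivAt_integral_sinh_pow_mul_exp_neg_mul_sinh 1 hx).fun_neg
  have hderiv : ∀ᶠ z in 𝓝 x, HasDerivAt y
      ((2 / π) * (∫ θ in (0:ℝ)..(π / 2), cos θ * cos (z * cos θ))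
        - (2 / π) * -∫ s in Ioi 0, sinh s * exp (-z * sinh s)) z := by
    filter_upwards [Ioi_mem_nhds hx] with z (hz : 0 < z)
    rw [show y = _ from funext hy]
    exact ((hasDerivAt_intervalIntegral_sin_mul_cos _ _ z).const_mul _).sub ((hK hz).const_mul _)
  have hderiv2 := ((hasDerivAt_intervalIntegral_cos_mul_cos_mul_cos 0 (π / 2) x).const_mul
    (2 / π)).sub (hK'.const_mul (2 / π))
  rw [deriv_deriv_eq_of_hasDerivAt hderiv hderiv2, hderiv.self_of_nhds.deriv, hy x]
  linear_combination (2 / π) * bessel_operator_intervalIntegral_sin_mul_cos_eq_one x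
    - (2 / π) * bessel_operator_integral_exp_neg_mul_sinh_eq_one hx
end
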